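/- If f̃(n) → ∞ (equivalently liminf (Π_{i=1}^n f(i))^{1/n} = ∞), then there exists an increasing sequence n(1) < n(2) < ... of integers with Π_{i=1}^{n(k)} f̃(i) = Π_{i=1}^{n(k)} f(i) for all k. -/

import Mathlib

open MeasureTheory ProbabilityTheory Filter Finset

/-- `Π_{i=1}^n f̃(i)`, the running product of the convexified growth function:
`f̃(n+1) = sup{a > 0 : a^m Π_{i=1}^n f̃(i) ≤ Π_{i=1}^{n+m} f(i) for all m ≥ 1}`. -/
noncomputable def ftilProd (f : ℕ → ℕ) : ℕ → ℝ
  | 0 => 1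
  | n + 1 => ftilProd f n * sSup {a : ℝ | 0 < a ∧ ∀ m : ℕ, 1 ≤ m →
      a ^ m * ftilProd f n ≤ ∏ i ∈ Finset.Icc 1 (n + m), (f i : ℝ)}

/-- the convexified growth function `f̃` (indexed so that `ftilde f n` is `f̃(n)` for
`n ≥ 1`). -/
noncomputable def ftilde (f : ℕ → ℕ) (n : ℕ) : ℝ := ftilProd f n / ftilProd f (n - 1)

namespace FtildeAux

/-- The defining set of `f̃(n+1)`. -/
def S (f : ℕ → ℕ) (n : ℕ) : Set ℝ := {a : ℝ | 0 < a ∧ ∀ m : ℕ, 1 ≤ m →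
      a ^ m * ftilProd f n ≤ ∏ i ∈ Finset.Icc 1 (n + m), (f i : ℝ)}

lemma Q_succ (f : ℕ → ℕ) (n : ℕ) : ftilProd f (n + 1) = ftilProd f n * sSup (S f n) := rfl

variable {f : ℕ → ℕ}

lemma one_le_prod_real {g : ℕ → ℝ} {s : Finset ℕ} (hg : ∀ i ∈ s, 1 ≤ g i) :
    1 ≤ ∏ i ∈ s, g i := by
  calc (1 : ℝ) = ∏ _i ∈ s, 1 := Finset.prod_const_one.symm
    _ ≤ ∏ i ∈ s, g i := Finset.prod_le_prod (fun i _ => zero_le_one) hg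

lemma prod_le_prod_subset_one_le {g : ℕ → ℝ} {s t : Finset ℕ} (hst : s ⊆ t)
    (hg : ∀ i ∈ t, 1 ≤ g i) : ∏ i ∈ s, g i ≤ ∏ i ∈ t, g i := by
  rw [← Finset.prod_sdiff hst]
  refine le_mul_of_one_le_left ?_ ?_
  · exact Finset.prod_nonneg fun i hi => le_trans zero_le_one (hg i (hst hi))
  · exact one_le_prod_real fun i hi => hg i (Finset.mem_sdiff.1 hi).1

lemma one_le_P (hf : ∀ n, 1 ≤ f n) (n : ℕ) :
    (1 : ℝ) ≤ ∏ i ∈ Finset.Icc 1 n, (f i : ℝ) :=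
  one_le_prod_real fun i _ => by exact_mod_cast hf i

lemma P_pos (hf : ∀ n, 1 ≤ f n) (n : ℕ) :
    (0 : ℝ) < ∏ i ∈ Finset.Icc 1 n, (f i : ℝ) :=
  lt_of_lt_of_le one_pos (one_le_P hf n)

lemma P_mono (hf : ∀ n, 1 ≤ f n) {n k : ℕ} (h : n ≤ k) :
    ∏ i ∈ Finset.Icc 1 n, (f i : ℝ) ≤ ∏ i ∈ Finset.Icc 1 k, (f i : ℝ) :=
  prod_le_prod_subset_one_le (Finset.Icc_subset_Icc_right h)
    (fun i _ => by exact_mod_cast hf i)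

lemma one_mem_S (hf : ∀ n, 1 ≤ f n) {n : ℕ}
    (hle : ftilProd f n ≤ ∏ i ∈ Finset.Icc 1 n, (f i : ℝ)) : (1 : ℝ) ∈ S f n := by
  refine ⟨one_pos, fun m hm => ?_⟩
  rw [one_pow, one_mul]
  exact hle.trans (P_mono hf (Nat.le_add_right n m))

lemma bddAbove_S {n : ℕ} (hpos : 0 < ftilProd f n) : BddAbove (S f n) := by
  refine ⟨(∏ i ∈ Finset.Icc 1 (n + 1), (f i : ℝ)) / ftilProd f n, fun a ha => ?_⟩
  have h := ha.2 1 le_rfl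
  rw [pow_one] at h
  exact (le_div_iff₀ hpos).2 h

lemma Q_pos_le (hf : ∀ n, 1 ≤ f n) :
    ∀ n, 0 < ftilProd f n ∧ ftilProd f n ≤ ∏ i ∈ Finset.Icc 1 n, (f i : ℝ) := by
  intro n
  induction n with
  | zero => simp [ftilProd]
  | succ n ih =>
    obtain ⟨hpos, hle⟩ := ih
    have h1 : (1 : ℝ) ∈ S f n := one_mem_S hf hle
    have hbdd : BddAbove (S f n) := bddAbove_S hpos
    have hsup1 : 1 ≤ sSup (S f n) := le_csSup hbdd h1
    have hsup_le : sSup (S f n) ≤ (∏ i ∈ Finset.Icc 1 (n + 1), (f i : ℝ)) / ftilProd f n := by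
      refine csSup_le ⟨1, h1⟩ fun a ha => ?_
      have h := ha.2 1 le_rfl
      rw [pow_one] at h
      exact (le_div_iff₀ hpos).2 h
    constructor
    · rw [Q_succ]; exact mul_pos hpos (lt_of_lt_of_le one_pos hsup1)
    · rw [Q_succ]
      calc ftilProd f n * sSup (S f n)
          ≤ ftilProd f n * ((∏ i ∈ Finset.Icc 1 (n + 1), (f i : ℝ)) / ftilProd f n) :=
            mul_le_mul_of_nonneg_left hsup_le hpos.le
        _ = ∏ i ∈ Finset.Icc 1 (n + 1), (f i : ℝ) := by field_simp

lemma Q_pos (hf : ∀ n, 1 ≤ f n) (n : ℕ) : 0 < ftilProd f n := (Q_pos_le hf n).1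

lemma Q_le_P (hf : ∀ n, 1 ≤ f n) (n : ℕ) :
    ftilProd f n ≤ ∏ i ∈ Finset.Icc 1 n, (f i : ℝ) := (Q_pos_le hf n).2

lemma one_le_sSup_S (hf : ∀ n, 1 ≤ f n) (n : ℕ) : 1 ≤ sSup (S f n) :=
  le_csSup (bddAbove_S (Q_pos hf n)) (one_mem_S hf (Q_le_P hf n))

lemma ftilde_succ (hf : ∀ n, 1 ≤ f n) (n : ℕ) : ftilde f (n + 1) = sSup (S f n) := by
  have hpos := Q_pos hf n
  simp only [ftilde, Nat.add_sub_cancel, Q_succ]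
  exact mul_div_cancel_left₀ _ hpos.ne'

lemma one_le_ftilde (hf : ∀ n, 1 ≤ f n) {n : ℕ} (hn : 1 ≤ n) : 1 ≤ ftilde f n := by
  obtain ⟨k, rfl⟩ := Nat.exists_eq_add_of_le hn
  rw [Nat.add_comm, ftilde_succ hf]
  exact one_le_sSup_S hf k

lemma prod_ftilde (hf : ∀ n, 1 ≤ f n) (n : ℕ) :
    ∏ i ∈ Finset.Icc 1 n, ftilde f i = ftilProd f n := by
  induction n with
  | zero => simp [ftilProd]
  | succ n ih =>
    rw [Finset.prod_Icc_succ_top (Nat.succ_le_succ (Nat.zero_le n)), ih,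
      ftilde_succ hf, Q_succ]

/-- The supremum belongs to the defining set. -/
lemma sSup_mem_S (hf : ∀ n, 1 ≤ f n) (n : ℕ) : sSup (S f n) ∈ S f n := by
  have hQ := Q_pos hf n
  refine ⟨lt_of_lt_of_le one_pos (one_le_sSup_S hf n), fun m hm => ?_⟩
  by_contra hcon
  push_neg at hcon
  set r := (∏ i ∈ Finset.Icc 1 (n + m), (f i : ℝ)) / ftilProd f n with hrdef
  have hrpos : 0 < r := div_pos (P_pos hf _) hQ
  have hm0 : (m : ℝ) ≠ 0 := Nat.cast_ne_zero.2 (by omega)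
  set u := r ^ ((m : ℝ)⁻¹) with hudef
  have hub : ∀ a ∈ S f n, a ≤ u := by
    intro a ha
    have ham : a ^ m ≤ r := (le_div_iff₀ hQ).2 (ha.2 m hm)
    have h1 : a = (a ^ m) ^ ((m : ℝ)⁻¹) := by
      rw [← Real.rpow_natCast a m, ← Real.rpow_mul ha.1.le, mul_inv_cancel₀ hm0,
        Real.rpow_one]
    rw [h1]
    exact Real.rpow_le_rpow (pow_nonneg ha.1.le m) ham (inv_nonneg.2 (Nat.cast_nonneg m))
  have hbu : sSup (S f n) ≤ u := csSup_le ⟨1, one_mem_S hf (Q_le_P hf n)⟩ hub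
  have hum : u ^ m = r := by
    rw [hudef, ← Real.rpow_natCast (r ^ ((m:ℝ)⁻¹)) m, ← Real.rpow_mul hrpos.le,
      inv_mul_cancel₀ hm0, Real.rpow_one]
  have h2 : sSup (S f n) ^ m ≤ r := by
    calc sSup (S f n) ^ m ≤ u ^ m :=
          pow_le_pow_left₀ (le_trans zero_le_one (one_le_sSup_S hf n)) hbu m
      _ = r := hum
  have h3 : r < sSup (S f n) ^ m := (div_lt_iff₀ hQ).2 hcon
  linarith

/-- Splitting the product of `ftilde`. -/
lemma Q_split (hf : ∀ n, 1 ≤ f n) (n m : ℕ) :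
    ftilProd f n * ∏ i ∈ Finset.Icc (n + 1) (n + m), ftilde f i = ftilProd f (n + m) := by
  rw [← prod_ftilde hf n, ← prod_ftilde hf (n + m)]
  have e1 : Finset.Icc 1 n = Finset.Ioc 0 n := by rw [← Finset.Icc_add_one_left_eq_Ioc, zero_add]
  have e2 : Finset.Icc 1 (n + m) = Finset.Ioc 0 (n + m) := by rw [← Finset.Icc_add_one_left_eq_Ioc, zero_add]
  have e3 : Finset.Icc (n + 1) (n + m) = Finset.Ioc n (n + m) := by rw [← Finset.Icc_add_one_left_eq_Ioc]
  rw [e1, e2, e3]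
  exact Finset.prod_Ioc_consecutive _ (Nat.zero_le n) (Nat.le_add_right n m)

/-- Key step: from an equality point, there is a later equality point. -/
lemma key (hf : ∀ n, 1 ≤ f n)
    (htend : Filter.Tendsto (fun n => ftilde f n) Filter.atTop Filter.atTop) (n : ℕ)
    (heq : ftilProd f n = ∏ i ∈ Finset.Icc 1 n, (f i : ℝ)) :
    ∃ m, 1 ≤ m ∧ ftilProd f (n + m) = ∏ i ∈ Finset.Icc 1 (n + m), (f i : ℝ) := by
  set b := sSup (S f n) with hbdef
  have hb1 : 1 ≤ b := one_le_sSup_S hf n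
  have hb0 : (0 : ℝ) < b := lt_of_lt_of_le one_pos hb1
  have hbS : b ∈ S f n := sSup_mem_S hf n
  have hQn := Q_pos hf n
  -- Step 1: equality is attained for some exponent m.
  have hex : ∃ m, 1 ≤ m ∧ b ^ m * ftilProd f n = ∏ i ∈ Finset.Icc 1 (n + m), (f i : ℝ) := by
    by_contra hcon
    push_neg at hcon
    have hstrict : ∀ m, 1 ≤ m →
        b ^ m * ftilProd f n < ∏ i ∈ Finset.Icc 1 (n + m), (f i : ℝ) :=
      fun m hm => lt_of_le_of_ne (hbS.2 m hm) (hcon m hm)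
    obtain ⟨N₀, hN₀⟩ := Filter.eventually_atTop.1 (htend.eventually_ge_atTop (2 * b))
    set N := max N₀ (n + 1) with hNdef
    have hN : ∀ i, N ≤ i → 2 * b ≤ ftilde f i := fun i hi =>
      hN₀ i (le_trans (le_max_left _ _) hi)
    -- lower bound for products at large m
    have hlarge : ∀ m, N ≤ m →
        (2 * b) ^ (m - N) * ftilProd f n ≤ ∏ i ∈ Finset.Icc 1 (n + m), (f i : ℝ) := by
      intro m hm
      have h2b : (1 : ℝ) ≤ 2 * b := by linarith
      have hsub : Finset.Icc N (n + m) ⊆ Finset.Icc (n + 1) (n + m) :=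
        Finset.Icc_subset_Icc_left (le_max_right _ _)
      have hcard : (Finset.Icc N (n + m)).card = n + m + 1 - N := Nat.card_Icc N (n + m)
      have h1 : (2 * b) ^ (m - N) ≤ (2 * b) ^ (n + m + 1 - N) :=
        pow_le_pow_right₀ h2b (by omega)
      have h2 : (2 * b) ^ (n + m + 1 - N) ≤ ∏ i ∈ Finset.Icc N (n + m), ftilde f i := by
        rw [← hcard, ← Finset.prod_const]
        refine Finset.prod_le_prod (fun i _ => by linarith) (fun i hi => ?_)
        exact hN i (Finset.mem_Icc.1 hi).1
      have h3 : ∏ i ∈ Finset.Icc N (n + m), ftilde f i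
          ≤ ∏ i ∈ Finset.Icc (n + 1) (n + m), ftilde f i := by
        apply prod_le_prod_subset_one_le hsub
        intro i hi
        exact one_le_ftilde hf (le_trans (Nat.succ_le_succ (Nat.zero_le n))
          (Finset.mem_Icc.1 hi).1)
      calc (2 * b) ^ (m - N) * ftilProd f n
          ≤ (∏ i ∈ Finset.Icc (n + 1) (n + m), ftilde f i) * ftilProd f n := by
            exact mul_le_mul_of_nonneg_right (le_trans h1 (le_trans h2 h3)) hQn.le
        _ = ftilProd f (n + m) := by rw [mul_comm]; exact Q_split hf n m
        _ ≤ ∏ i ∈ Finset.Icc 1 (n + m), (f i : ℝ) := Q_le_P hf (n + m)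
    -- choose M₀ handling the (4/3)^m growth
    have h43 : Filter.Tendsto (fun m : ℕ => (4 / 3 : ℝ) ^ m) Filter.atTop Filter.atTop :=
      tendsto_pow_atTop_atTop_of_one_lt (by norm_num)
    obtain ⟨M₀, hM₀⟩ := Filter.eventually_atTop.1 (h43.eventually_ge_atTop ((2 * b) ^ N))
    set M := max M₀ N with hMdef
    have hbig : ∀ m, M ≤ m →
        ((3 / 2) * b) ^ m * ftilProd f n ≤ ∏ i ∈ Finset.Icc 1 (n + m), (f i : ℝ) := by
      intro m hm
      have hmN : N ≤ m := le_trans (le_max_right _ _) hm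
      have hm0 : (2 * b) ^ N ≤ (4 / 3) ^ m := hM₀ m (le_trans (le_max_left _ _) hm)
      have h2bpos : (0 : ℝ) < 2 * b := by linarith
      have e1 : (2 * b) ^ (m - N) * (2 * b) ^ N = (2 * b) ^ m := by
        rw [← pow_add, Nat.sub_add_cancel hmN]
      have keymul : ((3 / 2) * b) ^ m * (4 / 3 : ℝ) ^ m = (2 * b) ^ m := by
        rw [← mul_pow]; congr 1; ring
      have e2 : ((3 / 2) * b) ^ m * (2 * b) ^ N ≤ (2 * b) ^ m := by
        calc ((3 / 2) * b) ^ m * (2 * b) ^ N ≤ ((3 / 2) * b) ^ m * (4 / 3) ^ m :=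
              mul_le_mul_of_nonneg_left hm0 (pow_nonneg (by linarith) m)
          _ = (2 * b) ^ m := keymul
      rw [← e1] at e2
      have h1 : ((3 / 2) * b) ^ m ≤ (2 * b) ^ (m - N) :=
        le_of_mul_le_mul_right e2 (pow_pos h2bpos N)
      exact le_trans (mul_le_mul_of_nonneg_right h1 hQn.le) (hlarge m hmN)
    -- finite part: eventually near b all constraints m ≤ M are strict
    have hev : ∀ m ∈ Finset.Icc 1 M, ∀ᶠ a in nhds b,
        a ^ m * ftilProd f n < ∏ i ∈ Finset.Icc 1 (n + m), (f i : ℝ) := by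
      intro m hm
      have hopen : IsOpen {a : ℝ | a ^ m * ftilProd f n
          < ∏ i ∈ Finset.Icc 1 (n + m), (f i : ℝ)} :=
        isOpen_lt ((continuous_pow m).mul continuous_const) continuous_const
      exact hopen.mem_nhds (hstrict m (Finset.mem_Icc.1 hm).1)
    have hev2 : ∀ᶠ a in nhds b, ∀ m ∈ Finset.Icc 1 M,
        a ^ m * ftilProd f n < ∏ i ∈ Finset.Icc 1 (n + m), (f i : ℝ) :=
      (Filter.eventually_all_finset _).2 hev
    have hev3 : ∀ᶠ a in nhds b, a < (3 / 2) * b :=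
      Filter.eventually_iff_exists_mem.2 ⟨Set.Iio ((3 / 2) * b),
        Iio_mem_nhds (by linarith), fun a ha => ha⟩
    have hev4 : ∀ᶠ a in nhdsWithin b (Set.Ioi b),
        (a < (3 / 2) * b ∧ ∀ m ∈ Finset.Icc 1 M,
          a ^ m * ftilProd f n < ∏ i ∈ Finset.Icc 1 (n + m), (f i : ℝ)) ∧ b < a := by
      refine Filter.Eventually.and ((hev3.and hev2).filter_mono nhdsWithin_le_nhds) ?_
      exact eventually_mem_nhdsWithin
    obtain ⟨a, ⟨ha32, haM⟩, hab⟩ := hev4.exists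
    have ha0 : (0 : ℝ) < a := lt_trans hb0 hab
    have haS : a ∈ S f n := by
      refine ⟨ha0, fun m hm => ?_⟩
      rcases le_or_gt m M with h | h
      · exact (haM m (Finset.mem_Icc.2 ⟨hm, h⟩)).le
      · have h1 : a ^ m ≤ ((3 / 2) * b) ^ m := pow_le_pow_left₀ ha0.le ha32.le m
        exact le_trans (mul_le_mul_of_nonneg_right h1 hQn.le) (hbig m h.le)
    exact absurd (le_csSup (bddAbove_S hQn) haS) (not_le.2 hab)
  -- Step 2: between equality points ftilde is constant.
  obtain ⟨m, hm1, hmeq⟩ := hex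
  refine ⟨m, hm1, ?_⟩
  have hind : ∀ j, j ≤ m → ftilProd f (n + j) = b ^ j * ftilProd f n := by
    intro j
    induction j with
    | zero => intro _; simp
    | succ j ih =>
      intro hj
      have hj' : j ≤ m := by omega
      have hQj := ih hj'
      have hQjpos : (0 : ℝ) < b ^ j * ftilProd f n := mul_pos (pow_pos hb0 j) hQn
      have hbmem : b ∈ S f (n + j) := by
        refine ⟨hb0, fun k hk => ?_⟩
        have e0 : b ^ k * ftilProd f (n + j) = b ^ (k + j) * ftilProd f n := by
          rw [hQj, pow_add]; ring
        have hidx : n + j + k = n + (k + j) := by omega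
        rw [e0, hidx]
        exact hbS.2 (k + j) (by omega)
      have hub : ∀ a ∈ S f (n + j), a ≤ b := by
        intro a ha
        have h1 := ha.2 (m - j) (by omega)
        have hidx : n + j + (m - j) = n + m := by omega
        rw [hQj, hidx] at h1
        have e3 : b ^ (m - j) * (b ^ j * ftilProd f n) = b ^ m * ftilProd f n := by
          rw [← mul_assoc, ← pow_add, Nat.sub_add_cancel hj']
        have h2 : a ^ (m - j) * (b ^ j * ftilProd f n)
            ≤ b ^ (m - j) * (b ^ j * ftilProd f n) := by
          rw [e3, hmeq]; exact h1
        have h3 : a ^ (m - j) ≤ b ^ (m - j) := le_of_mul_le_mul_right h2 hQjpos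
        exact le_of_pow_le_pow_left₀ (by omega) hb0.le h3
      have hsup : sSup (S f (n + j)) = b :=
        le_antisymm (csSup_le ⟨b, hbmem⟩ hub)
          (le_csSup (bddAbove_S (Q_pos hf (n + j))) hbmem)
      have : n + (j + 1) = (n + j) + 1 := rfl
      rw [this, Q_succ, hsup, hQj, pow_succ]; ring
  rw [hind m le_rfl, hmeq]

end FtildeAux

/-- if `f̃(n) → ∞` (equivalently `liminf (Π_{i=1}^n f(i))^{1/n} = ∞`),
then there is an increasing sequence `n(1) < n(2) < …` along which the products of
`f̃` and of `f` agree: `Π_{i=1}^{n(k)} f̃(i) = Π_{i=1}^{n(k)} f(i)`. -/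
theorem ftilde_product_agrees_along_subsequence (f : ℕ → ℕ) (hf : ∀ n, 1 ≤ f n)
    (htend : Filter.Tendsto (fun n => ftilde f n) Filter.atTop Filter.atTop) :
    ∃ nseq : ℕ → ℕ, StrictMono nseq ∧ (∀ k, 1 ≤ nseq k) ∧
      ∀ k, ∏ i ∈ Finset.Icc 1 (nseq k), ftilde f i =
        ∏ i ∈ Finset.Icc 1 (nseq k), (f i : ℝ) := by
  classical
  have h0 : ftilProd f 0 = ∏ i ∈ Finset.Icc 1 0, (f i : ℝ) := by simp [ftilProd]
  set T := {n : ℕ // ftilProd f n = ∏ i ∈ Finset.Icc 1 n, (f i : ℝ)} with hTdef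
  have stepT : ∀ t : T, ∃ t' : T, (t : ℕ) < (t' : ℕ) := by
    intro t
    obtain ⟨m, hm1, hm2⟩ := FtildeAux.key hf htend t.1 t.2
    exact ⟨⟨t.1 + m, hm2⟩, by simp; omega⟩
  choose F hF using stepT
  set t0 : T := ⟨0, h0⟩ with ht0
  set g : ℕ → ℕ := fun k => ((F^[k + 1] t0 : T) : ℕ) with hgdef
  have hlt : ∀ k, g k < g (k + 1) := by
    intro k
    have e : F^[k + 1 + 1] t0 = F (F^[k + 1] t0) := Function.iterate_succ_apply' F (k + 1) t0
    simp only [hgdef, e]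
    exact hF _
  have hsm : StrictMono g := strictMono_nat_of_lt_succ hlt
  have hg1 : ∀ k, 1 ≤ g k := by
    intro k
    have h1 : 0 < g 0 := by
      simp only [hgdef, Function.iterate_one]
      exact lt_of_le_of_lt (Nat.zero_le _) (hF t0)
    exact le_trans h1 (hsm.monotone (Nat.zero_le k))
  refine ⟨g, hsm, hg1, fun k => ?_⟩
  rw [FtildeAux.prod_ftilde hf]
  exact (F^[k + 1] t0).2
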